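/- Let (A, q_A) and (B, q_B) be non-degenerate finite quadratic forms, φ : D_A → D_B an anti-isometry between subgroups (q_B(φ(x)) = -q_A(x)), Γ ⊆ A ⊕ B its graph, and C := Γ^⊥/Γ with the induced quadratic form. Let K be the kernel of the natural homomorphism {(g,h) ∈ O(A) × O(B) : Γ^{(g,h)} = Γ} → O(C). Then the projection i_A : K → O(A), (g,h) ↦ g, is injective. -/

import Mathlib

/-- ℚ/2ℤ, the value group of a finite quadratic form. -/
abbrev Q2 : Type := ℚ ⧸ AddSubgroup.zmultiples (2 : ℚ)

/-- The polar (bilinear) form associated to a quadratic form `q`; with values in ℚ/2ℤ it is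
twice the usual ℚ/ℤ-valued bilinear form `b`, and vanishes exactly when `b` does. -/
def qpolar {A : Type} [AddCommGroup A] (q : A → Q2) (x y : A) : Q2 :=
  q (x + y) - q x - q y

/-- `q` is a non-degenerate finite quadratic form on the finite abelian group `A`. -/
structure IsNondegFQF {A : Type} [AddCommGroup A] [Fintype A] (q : A → Q2) : Prop where
  hom : ∀ (n : ℤ) (a : A), q (n • a) = (n ^ 2) • q a
  bilin : ∀ a b c : A, qpolar q (a + b) c = qpolar q a c + qpolar q b c
  nondeg : ∀ a : A, (∀ b : A, qpolar q a b = 0) → a = 0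


/-- `(a, b)` lies in the graph `Γ ⊆ A ⊕ B` of `φ : D_A ≃ D_B`. -/
def InGraph {A B : Type} [AddCommGroup A] [AddCommGroup B]
    (DA : AddSubgroup A) (DB : AddSubgroup B) (φ : DA ≃+ DB) (a : A) (b : B) : Prop :=
  ∃ x : DA, (x : A) = a ∧ (φ x : B) = b

/-- `(a, b)` lies in `Γ^⊥`, the orthogonal complement of the graph of `φ`
with respect to the bilinear form associated to `q_A ⊕ q_B`. -/
def InPerp {A B : Type} [AddCommGroup A] [AddCommGroup B]
    (qA : A → Q2) (qB : B → Q2) (DA : AddSubgroup A) (DB : AddSubgroup B)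
    (φ : DA ≃+ DB) (a : A) (b : B) : Prop :=
  ∀ x : DA, qpolar qA a (x : A) + qpolar qB b (φ x : B) = 0

/-!
Fix `b : B`. The functional `x ↦ -qpolar qB b (φ x)` on `D_A` extends to `A` since `ℚ/2ℤ` is
divisible, and it is `qpolar qA a` for some `a : A`, because the polar form of a non-degenerate
`qA` embeds `A` into `A →+ ℚ/2ℤ`, a group of the same finite order. Then `(a, b) ∈ Γ^⊥`, so both
`(g a - a, h₁ b - b)` and `(g a - a, h₂ b - b)` lie in the graph `Γ`, forcing `h₁ b = h₂ b`.
-/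

open AddSubgroup

noncomputable instance : DivisibleBy Q2 ℤ :=
  have : Fact (0 < (2 : ℚ)) := ⟨two_pos⟩
  inferInstanceAs (DivisibleBy (AddCircle (2 : ℚ)) ℤ)

namespace Q2

lemma mem_zmultiples_of_nsmul_eq_zero {n : ℕ} (hn : 0 < n) {x : Q2} (hx : n • x = 0) :
    x ∈ zmultiples (((2 / n : ℚ)) : Q2) := by
  have : Fact (0 < (2 : ℚ)) := ⟨two_pos⟩
  obtain ⟨m, -, rfl⟩ := (AddCircle.nsmul_eq_zero_iff (p := (2 : ℚ)) hn).mp hx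
  refine ⟨m, ?_⟩
  change (m : ℤ) • (((2 / n : ℚ)) : Q2) = _
  rw [← QuotientAddGroup.mk_zsmul]
  congr 1
  simp only [zsmul_eq_mul, Int.cast_natCast]
  ring

instance hasEnoughRootsOfUnity (n : ℕ) [NeZero n] :
    HasEnoughRootsOfUnity (Multiplicative Q2) n := by
  have hn : 0 < n := Nat.pos_of_ne_zero (NeZero.ne n)
  have : Fact (0 < (2 : ℚ)) := ⟨two_pos⟩
  set ζ : Multiplicative Q2 := .ofAdd (((2 / n : ℚ)) : Q2)
  have hζ : IsPrimitiveRoot ζ n := by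
    have : orderOf ζ = n := by
      rw [orderOf_ofAdd_eq_addOrderOf]
      exact AddCircle.addOrderOf_period_div hn
    exact this ▸ IsPrimitiveRoot.orderOf ζ
  have hζ_mem : toUnits ζ ∈ rootsOfUnity n (Multiplicative Q2) := by
    rw [mem_rootsOfUnity, ← map_pow, hζ.pow_eq_one, map_one]
  refine ⟨⟨ζ, hζ⟩, ⟨⟨⟨toUnits ζ, hζ_mem⟩, fun u => ?_⟩⟩⟩
  have hu : n • ((u : (Multiplicative Q2)ˣ) : Multiplicative Q2).toAdd = 0 := by
    rw [← toAdd_pow, (mem_rootsOfUnity' n _).mp u.2, toAdd_one]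
  obtain ⟨k, hk⟩ := mem_zmultiples_of_nsmul_eq_zero hn hu
  refine Subgroup.mem_zpowers_iff.mpr ⟨k, Subtype.ext (Units.ext ?_)⟩
  simp only [SubgroupClass.coe_zpow, Units.val_zpow_eq_zpow_val]
  exact Multiplicative.toAdd.injective hk

lemma nonempty_addMonoidHom_equiv (A : Type) [AddCommGroup A] [Finite A] :
    Nonempty ((A →+ Q2) ≃ A) := by
  have : NeZero (Monoid.exponent (Multiplicative A)) := ⟨Monoid.exponent_ne_zero_of_finite⟩
  obtain ⟨e⟩ := CommGroup.monoidHom_mulEquiv_of_hasEnoughRootsOfUnity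
    (Multiplicative A) (Multiplicative Q2)
  exact ⟨AddMonoidHom.toMultiplicative.trans <|
    (MulEquiv.monoidHomCongrRight toUnits).toEquiv.trans <| e.toEquiv.trans Multiplicative.toAdd⟩

lemma exists_extension {A : Type} [AddCommGroup A] (D : AddSubgroup A) (f : D →+ Q2) :
    ∃ F : A →+ Q2, ∀ x : D, F x = f x := by
  obtain ⟨F, hF⟩ := (Module.Baer.of_divisible Q2).injective.out D.subtype.toIntLinearMap
    Subtype.coe_injective f.toIntLinearMap
  exact ⟨F.toAddMonoidHom, hF⟩

end Q2

lemma qpolar_comm {A : Type} [AddCommGroup A] (q : A → Q2) (x y : A) :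
    qpolar q x y = qpolar q y x := by
  unfold qpolar
  rw [add_comm x y]
  abel

namespace IsNondegFQF

variable {A : Type} [AddCommGroup A] [Fintype A] {q : A → Q2}

lemma qpolar_add_right (hq : IsNondegFQF q) (a b c : A) :
    qpolar q a (b + c) = qpolar q a b + qpolar q a c := by
  rw [qpolar_comm q a, hq.bilin, qpolar_comm q b, qpolar_comm q c]

def polarHom (hq : IsNondegFQF q) : A →+ (A →+ Q2) :=
  AddMonoidHom.mk' (fun a => AddMonoidHom.mk' (qpolar q a) (hq.qpolar_add_right a))
    fun a b => AddMonoidHom.ext (hq.bilin a b)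

@[simp]
lemma polarHom_apply (hq : IsNondegFQF q) (a x : A) : hq.polarHom a x = qpolar q a x := rfl

lemma polarHom_injective (hq : IsNondegFQF q) : Function.Injective hq.polarHom :=
  (injective_iff_map_eq_zero _).mpr fun a ha => hq.nondeg a (DFunLike.congr_fun ha)

lemma polarHom_surjective (hq : IsNondegFQF q) : Function.Surjective hq.polarHom :=
  have ⟨e⟩ := Q2.nonempty_addMonoidHom_equiv A
  (Finite.injective_iff_surjective_of_equiv e.symm).mp hq.polarHom_injective

end IsNondegFQF

section Graph

variable {A B : Type} [AddCommGroup A] [AddCommGroup B] {DA : AddSubgroup A}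
  {DB : AddSubgroup B} (φ : DA ≃+ DB)

lemma exists_inPerp [Fintype A] [Fintype B] {qA : A → Q2} {qB : B → Q2}
    (hA : IsNondegFQF qA) (hB : IsNondegFQF qB) (b : B) : ∃ a : A, InPerp qA qB DA DB φ a b := by
  obtain ⟨F, hF⟩ :=
    Q2.exists_extension DA (-(hB.polarHom b).comp (DB.subtype.comp φ.toAddMonoidHom))
  obtain ⟨a, rfl⟩ := hA.polarHom_surjective F
  refine ⟨a, fun x => ?_⟩
  rw [← hA.polarHom_apply, hF]
  simp

variable {φ} in
lemma InGraph.right_unique {a : A} {b b' : B} (h : InGraph DA DB φ a b)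
    (h' : InGraph DA DB φ a b') : b = b' := by
  obtain ⟨x, rfl, rfl⟩ := h
  obtain ⟨x', hx', rfl⟩ := h'
  rw [Subtype.ext hx']

end Graph

theorem statement1_general {A B : Type} [AddCommGroup A] [Fintype A] [AddCommGroup B] [Fintype B]
    (qA : A → Q2) (qB : B → Q2) (hA : IsNondegFQF qA) (hB : IsNondegFQF qB)
    (DA : AddSubgroup A) (DB : AddSubgroup B) (φ : DA ≃+ DB)
    (g : A ≃+ A) (h₁ h₂ : B ≃+ B)
    -- `(g, h₁)` and `(g, h₂)` act trivially on `C = Γ^⊥/Γ`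
    (hC₁ : ∀ (a : A) (b : B), InPerp qA qB DA DB φ a b →
      InGraph DA DB φ (g a - a) (h₁ b - b))
    (hC₂ : ∀ (a : A) (b : B), InPerp qA qB DA DB φ a b →
      InGraph DA DB φ (g a - a) (h₂ b - b)) :
    h₁ = h₂ := by
  ext b
  obtain ⟨a, hab⟩ := exists_inPerp φ hA hB b
  exact sub_left_injective ((hC₁ a b hab).right_unique (hC₂ a b hab))

/-- the projection `i_A : K → O(A)`, `(g, h) ↦ g`, is injective, where `K` is the
kernel of the map from the stabilizer of `Γ` in `O(A) × O(B)` to `O(Γ^⊥/Γ)`: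
two elements `(g, h₁)` and `(g, h₂)` of `K` with the same first component are equal. -/
theorem statement1 {A B : Type} [AddCommGroup A] [Fintype A] [AddCommGroup B] [Fintype B]
    (qA : A → Q2) (qB : B → Q2) (hA : IsNondegFQF qA) (hB : IsNondegFQF qB)
    (DA : AddSubgroup A) (DB : AddSubgroup B) (φ : DA ≃+ DB)
    (hφ : ∀ x : DA, qB ((φ x : B)) = - qA ((x : A)))
    (g : A ≃+ A) (h₁ h₂ : B ≃+ B)
    (hg : ∀ a : A, qA (g a) = qA a)
    (hh₁ : ∀ b : B, qB (h₁ b) = qB b) (hh₂ : ∀ b : B, qB (h₂ b) = qB b)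
    -- `(g, h₁)` and `(g, h₂)` preserve `Γ`
    (hΓ₁ : ∀ (a : A) (b : B), InGraph DA DB φ a b ↔ InGraph DA DB φ (g a) (h₁ b))
    (hΓ₂ : ∀ (a : A) (b : B), InGraph DA DB φ a b ↔ InGraph DA DB φ (g a) (h₂ b))
    -- `(g, h₁)` and `(g, h₂)` act trivially on `C = Γ^⊥/Γ`
    (hC₁ : ∀ (a : A) (b : B), InPerp qA qB DA DB φ a b →
      InGraph DA DB φ (g a - a) (h₁ b - b))
    (hC₂ : ∀ (a : A) (b : B), InPerp qA qB DA DB φ a b →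
      InGraph DA DB φ (g a - a) (h₂ b - b)) :
    h₁ = h₂ :=
  statement1_general qA qB hA hB DA DB φ g h₁ h₂ hC₁ hC₂
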